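/- Let ψ, φ ∈ ℂ^{2^n} be unit vectors, and suppose there exist Pauli operators P, Q ∈ P_n with Pψ = ψ, Qφ = φ, and PQ = −QP. Then |⟨ψ, φ⟩| ≤ 1/√2. -/

import Mathlib

open Matrix

noncomputable section

/-- The space of `n`-qubit operators (2^n × 2^n complex matrices, indexed by bit strings). -/
abbrev QMat (n : ℕ) := Matrix (Fin n → Fin 2) (Fin n → Fin 2) ℂ

/-- The space of `n`-qubit state vectors (ℂ^{2^n}, indexed by bit strings). -/
abbrev QVec (n : ℕ) := (Fin n → Fin 2) → ℂ

def PauliX : Matrix (Fin 2) (Fin 2) ℂ := !![0, 1; 1, 0]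
def PauliY : Matrix (Fin 2) (Fin 2) ℂ := !![0, -Complex.I; Complex.I, 0]
def PauliZ : Matrix (Fin 2) (Fin 2) ℂ := !![1, 0; 0, -1]

/-- `Q` is one of the four single-qubit Pauli matrices `I, X, Y, Z`. -/
def IsSingleQubitPauli (Q : Matrix (Fin 2) (Fin 2) ℂ) : Prop :=
  Q = 1 ∨ Q = PauliX ∨ Q = PauliY ∨ Q = PauliZ

/-- Kronecker product, in qubit order, of `n` single-qubit operators. -/
def tensorn (n : ℕ) (Q : Fin n → Matrix (Fin 2) (Fin 2) ℂ) : QMat n :=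
  fun x y => ∏ j, Q j (x j) (y j)

/-- `P` is an element of the `n`-qubit Pauli group: `P = i^ℓ · Q_1 ⊗ ⋯ ⊗ Q_n`. -/
def IsPauli {n : ℕ} (P : QMat n) : Prop :=
  ∃ (ℓ : Fin 4) (Q : Fin n → Matrix (Fin 2) (Fin 2) ℂ),
    (∀ j, IsSingleQubitPauli (Q j)) ∧ P = (Complex.I ^ (ℓ : ℕ)) • tensorn n Q

/-!
A Pauli operator is `c • T` with `T` a Hermitian involution, and if it fixes a nonzero
vector then `c * c = 1`, so `c = ±1` and the operator is itself a Hermitian involution.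
Since `Q` fixes `φ` and anticommutes with `P`, the expectation `⟨φ, P φ⟩` equals its own
negative, hence vanishes. Therefore `χ = φ + P φ` has `‖χ‖² = 2`, while `P ψ = ψ` gives
`⟨ψ, χ⟩ = 2 ⟨ψ, φ⟩`, and Cauchy–Schwarz yields `2 |⟨ψ, φ⟩| ≤ √2`.
-/

section AnticommutingStabilizers

variable {𝕜 ι : Type*} [RCLike 𝕜] [Fintype ι]

lemma star_dotProduct_mulVec_eq (A : Matrix ι ι 𝕜) (x y : ι → 𝕜) :
    star x ⬝ᵥ (A *ᵥ y) = star (Aᴴ *ᵥ x) ⬝ᵥ y := by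
  rw [star_mulVec, conjTranspose_conjTranspose, dotProduct_mulVec]

lemma norm_star_dotProduct_sq_le (x y : ι → 𝕜) :
    ‖star x ⬝ᵥ y‖ ^ 2 ≤ RCLike.re (star x ⬝ᵥ x) * RCLike.re (star y ⬝ᵥ y) := by
  have h := inner_mul_inner_self_le (𝕜 := 𝕜) (WithLp.toLp 2 x) (WithLp.toLp 2 y)
  simp only [EuclideanSpace.inner_toLp_toLp] at h
  have hyx : star y ⬝ᵥ x = star (star x ⬝ᵥ y) := by rw [star_dotProduct]
  simp only [dotProduct_comm _ (star _)] at h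
  rwa [hyx, norm_star, ← sq] at h

variable [DecidableEq ι]

lemma star_dotProduct_mulVec_eq_zero_of_anticommute {P Q : Matrix ι ι 𝕜} {φ : ι → 𝕜}
    (hQ : Qᴴ * Q = 1) (hQφ : Q *ᵥ φ = φ) (hPQ : P * Q = -(Q * P)) :
    star φ ⬝ᵥ (P *ᵥ φ) = 0 := by
  refine self_eq_neg.mp ?_
  calc star φ ⬝ᵥ (P *ᵥ φ) = star (Q *ᵥ φ) ⬝ᵥ (P *ᵥ (Q *ᵥ φ)) := by rw [hQφ]
    _ = star φ ⬝ᵥ ((Qᴴ * (P * Q)) *ᵥ φ) := by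
      rw [← mulVec_mulVec, ← mulVec_mulVec, star_dotProduct_mulVec_eq Qᴴ,
        conjTranspose_conjTranspose]
    _ = -(star φ ⬝ᵥ (P *ᵥ φ)) := by
      rw [hPQ, mul_neg, ← mul_assoc, hQ, one_mul, neg_mulVec, dotProduct_neg]

theorem norm_star_dotProduct_le_of_anticommute {P Q : Matrix ι ι 𝕜} {ψ φ : ι → 𝕜}
    (hψ : star ψ ⬝ᵥ ψ = 1) (hφ : star φ ⬝ᵥ φ = 1) (hP : P.IsHermitian) (hP2 : P * P = 1)
    (hQ : Qᴴ * Q = 1) (hPψ : P *ᵥ ψ = ψ) (hQφ : Q *ᵥ φ = φ) (hPQ : P * Q = -(Q * P)) :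
    ‖star ψ ⬝ᵥ φ‖ ≤ (√2)⁻¹ := by
  have hPφ := star_dotProduct_mulVec_eq_zero_of_anticommute hQ hQφ hPQ
  set χ := φ + P *ᵥ φ
  have hψχ : star ψ ⬝ᵥ χ = 2 * (star ψ ⬝ᵥ φ) := by
    rw [dotProduct_add, star_dotProduct_mulVec_eq, hP.eq, hPψ]
    ring
  have hχχ : star χ ⬝ᵥ χ = 2 := by
    have hφP : star (P *ᵥ φ) ⬝ᵥ φ = 0 := by rwa [← hP.eq, ← star_dotProduct_mulVec_eq]
    have hPP : star (P *ᵥ φ) ⬝ᵥ (P *ᵥ φ) = 1 := by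
      rw [star_dotProduct_mulVec_eq, hP.eq, mulVec_mulVec, hP2, one_mulVec, hφ]
    rw [star_add, add_dotProduct, dotProduct_add, dotProduct_add, hφ, hPφ, hφP, hPP]
    norm_num
  have hcs := norm_star_dotProduct_sq_le ψ χ
  rw [hψχ, hψ, hχχ, norm_mul, RCLike.norm_two] at hcs
  rw [← Real.sqrt_inv]
  apply Real.le_sqrt_of_sq_le
  norm_num at hcs ⊢
  nlinarith

end AnticommutingStabilizers

namespace IsSingleQubitPauli

variable {Q : Matrix (Fin 2) (Fin 2) ℂ}

lemma mul_self (h : IsSingleQubitPauli Q) : Q * Q = 1 := by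
  rcases h with rfl | rfl | rfl | rfl <;>
    simp [PauliX, PauliY, PauliZ, one_fin_two]

lemma isHermitian (h : IsSingleQubitPauli Q) : Q.IsHermitian := by
  rcases h with rfl | rfl | rfl | rfl <;>
    ext i j <;> fin_cases i <;> fin_cases j <;>
    simp [PauliX, PauliY, PauliZ, conjTranspose_apply]

end IsSingleQubitPauli

section Tensor

variable {n : ℕ}

lemma tensorn_mul (A B : Fin n → Matrix (Fin 2) (Fin 2) ℂ) :
    tensorn n A * tensorn n B = tensorn n (fun j => A j * B j) := by
  ext x y
  simp only [tensorn, mul_apply, Finset.prod_univ_sum, Fintype.piFinset_univ]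
  exact Finset.sum_congr rfl fun z _ => Finset.prod_mul_distrib.symm

lemma tensorn_one : tensorn n (fun _ => 1) = 1 := by
  ext x y
  by_cases h : x = y
  · subst h
    simp [tensorn]
  · obtain ⟨j, hj⟩ := Function.ne_iff.mp h
    rw [one_apply_ne h]
    exact Finset.prod_eq_zero (Finset.mem_univ j) (one_apply_ne hj)

lemma isHermitian_tensorn {A : Fin n → Matrix (Fin 2) (Fin 2) ℂ} (h : ∀ j, (A j).IsHermitian) :
    (tensorn n A).IsHermitian := by
  ext x y
  simp only [tensorn, conjTranspose_apply, star_prod]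
  exact Finset.prod_congr rfl fun j _ => (h j).apply (x j) (y j)

end Tensor

namespace IsPauli

variable {n : ℕ} {P : QMat n}

lemma exists_eq_smul (hP : IsPauli P) :
    ∃ (c : ℂ) (T : QMat n), T.IsHermitian ∧ T * T = 1 ∧ P = c • T := by
  obtain ⟨ℓ, A, hA, rfl⟩ := hP
  refine ⟨_, _, isHermitian_tensorn fun j => (hA j).isHermitian, ?_, rfl⟩
  rw [tensorn_mul]
  simp only [fun j => (hA j).mul_self, tensorn_one]

lemma isHermitian_and_mul_self_of_mulVec_eq_self (hP : IsPauli P) {v : QVec n} (hv : v ≠ 0)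
    (hPv : P *ᵥ v = v) : P.IsHermitian ∧ P * P = 1 := by
  obtain ⟨c, T, hT, hT2, rfl⟩ := hP.exists_eq_smul
  have hc : c * c = 1 := by
    apply smul_left_injective ℂ hv
    calc (c * c) • v = (c • T * (c • T)) *ᵥ v := by
          rw [smul_mul_smul_comm, hT2, smul_mulVec, one_mulVec]
      _ = (1 : ℂ) • v := by rw [← mulVec_mulVec, hPv, hPv, one_smul]
  rcases mul_self_eq_one_iff.mp hc with rfl | rfl <;> simp [hT, hT.neg, hT2]

end IsPauli

/-- fidelity bound: if unit vectors `ψ, φ` are stabilized by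
anti-commuting Pauli operators, then `|⟨ψ, φ⟩| ≤ 1/√2`. -/
theorem fidelity_bound (n : ℕ) (ψ φ : QVec n)
    (hψ : star ψ ⬝ᵥ ψ = 1) (hφ : star φ ⬝ᵥ φ = 1)
    (P Q : QMat n) (hP : IsPauli P) (hQ : IsPauli Q)
    (hPψ : P *ᵥ ψ = ψ) (hQφ : Q *ᵥ φ = φ) (hanti : P * Q = -(Q * P)) :
    ‖star ψ ⬝ᵥ φ‖ ≤ (Real.sqrt 2)⁻¹ := by
  have hψ0 : ψ ≠ 0 := by rintro rfl; simp at hψ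
  have hφ0 : φ ≠ 0 := by rintro rfl; simp at hφ
  obtain ⟨hPH, hP2⟩ := hP.isHermitian_and_mul_self_of_mulVec_eq_self hψ0 hPψ
  obtain ⟨hQH, hQ2⟩ := hQ.isHermitian_and_mul_self_of_mulVec_eq_self hφ0 hQφ
  exact norm_star_dotProduct_le_of_anticommute hψ hφ hPH hP2 (by rw [hQH.eq, hQ2]) hPψ hQφ
    hanti
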